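/- Fix δ₁, δ₂ > 0 and linearly separable binary data (h_i, y_i) with y_i ∈ {1,2}. Consider the problem: minimize ‖w₁‖² + ‖w₂‖² over (w₁,w₂) subject to δ_{y_i}(w_{y_i}-w_c)ᵀh_i ≥ 1 for c ≠ y_i. Then adding the extra constraint w₂ = -w₁ does not change the optimal value, and under this constraint the problem is equivalent to minimizing 2‖w₁‖² subject to 2δ₁ w₁ᵀh_i ≥ 1 for i with y_i = 1 and -2δ₂ w₁ᵀh_i ≥ 1 for i with y_i = 2. -/

import Mathlib

open scoped InnerProductSpace

/-!
With two classes every margin constraint involves only the difference `w₀ - w₁`. Replacing a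
feasible pair `(w₀, w₁)` by the antipodal pair `±(w₀ - w₁)/2` therefore keeps it feasible, and
the objective can only drop: `2‖(w₀ - w₁)/2‖² = ‖w₀ - w₁‖²/2 ≤ ‖w₀‖² + ‖w₁‖²`. Conversely every
antipodal pair is feasible for the unconstrained problem with the same objective, so the two
infima agree. For an antipodal pair `(u, -u)` the difference is `±2u`, which gives the
single-vector constraints.
-/

section

variable {E ι K : Type*} [NormedAddCommGroup E] [InnerProductSpace ℝ E]

def MarginFeasible (h : ι → E) (y : ι → K) (δ : K → ℝ) (w : K → E) : Prop :=
  ∀ i, ∀ c, c ≠ y i → δ (y i) * ⟪w (y i) - w c, h i⟫_ℝ ≥ 1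

lemma marginFeasible_congr_fin_two {h : ι → E} {y : ι → Fin 2} {δ : Fin 2 → ℝ}
    {w w' : Fin 2 → E} (hw : w 0 - w 1 = w' 0 - w' 1) :
    MarginFeasible h y δ w ↔ MarginFeasible h y δ w' := by
  have hsub : ∀ a b : Fin 2, w a - w b = w' a - w' b := by
    have hw' : w 1 - w 0 = w' 1 - w' 0 := by rw [← neg_sub, hw, neg_sub]
    intro a b
    fin_cases a <;> fin_cases b <;> simp [hw, hw']
  simp only [MarginFeasible, hsub]

lemma marginFeasible_antipodal_iff (h : ι → E) (y : ι → Fin 2) (δ : Fin 2 → ℝ) (u : E) :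
    MarginFeasible h y δ ![u, -u] ↔
      (∀ i, y i = 0 → 2 * δ 0 * ⟪u, h i⟫_ℝ ≥ 1) ∧
      (∀ i, y i = 1 → -(2 * δ 1) * ⟪u, h i⟫_ℝ ≥ 1) := by
  rw [MarginFeasible, ← forall_and]
  refine forall_congr' fun i => ?_
  generalize y i = k
  fin_cases k <;>
    simp [Fin.forall_fin_two, sub_eq_add_neg, inner_add_left, inner_neg_left, two_mul, add_mul,
      mul_add]

lemma two_mul_norm_half_sub_sq_le {F : Type*} [SeminormedAddCommGroup F] [NormedSpace ℝ F]
    (u v : F) : 2 * ‖(2 : ℝ)⁻¹ • (u - v)‖ ^ 2 ≤ ‖u‖ ^ 2 + ‖v‖ ^ 2 := by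
  have htri := norm_sub_le u v
  rw [norm_smul, norm_inv, Real.norm_ofNat]
  nlinarith [norm_nonneg (u - v), sq_nonneg (‖u‖ - ‖v‖)]

end

theorem ldt_symmetrized_reduction {d n : ℕ}
    (h : Fin n → EuclideanSpace ℝ (Fin d)) (y : Fin n → Fin 2)
    (δ : Fin 2 → ℝ) :
    sInf {v : ℝ | ∃ w : Fin 2 → EuclideanSpace ℝ (Fin d),
        (∀ i, ∀ c, c ≠ y i → δ (y i) * ⟪w (y i) - w c, h i⟫_ℝ ≥ 1) ∧
        v = ‖w 0‖ ^ 2 + ‖w 1‖ ^ 2} =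
      sInf {v : ℝ | ∃ w1 : EuclideanSpace ℝ (Fin d),
        (∀ i, ∀ c, c ≠ y i →
          δ (y i) * ⟪(![w1, -w1]) (y i) - (![w1, -w1]) c, h i⟫_ℝ ≥ 1) ∧
        v = 2 * ‖w1‖ ^ 2} ∧
    ∀ w1 : EuclideanSpace ℝ (Fin d),
      (∀ i, ∀ c, c ≠ y i →
          δ (y i) * ⟪(![w1, -w1]) (y i) - (![w1, -w1]) c, h i⟫_ℝ ≥ 1) ↔
      ((∀ i, y i = 0 → 2 * δ 0 * ⟪w1, h i⟫_ℝ ≥ 1) ∧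
       (∀ i, y i = 1 → -(2 * δ 1) * ⟪w1, h i⟫_ℝ ≥ 1)) := by
  refine ⟨csInf_eq_csInf_of_forall_exists_le ?_ ?_, marginFeasible_antipodal_iff h y δ⟩
  · rintro _ ⟨w, hw, rfl⟩
    set u := (2 : ℝ)⁻¹ • (w 0 - w 1)
    have hdiff : ![u, -u] 0 - ![u, -u] 1 = w 0 - w 1 := by simp [u, ← two_smul ℝ]
    exact ⟨_, ⟨u, (marginFeasible_congr_fin_two hdiff).2 hw, rfl⟩,
      two_mul_norm_half_sub_sq_le (w 0) (w 1)⟩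
  · rintro _ ⟨u, hu, rfl⟩
    refine ⟨_, ⟨![u, -u], hu, rfl⟩, ?_⟩
    simp [two_mul]
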